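/- Let H be a connected hypergraph and C a Berge-cycle in H whose defining hyperedges together cover strictly fewer vertices than |V(H)|. Then H contains a Berge-path of length at least the length of C. -/

import Mathlib

def IsBergePath {V : Type*} (H : Finset (Finset V)) (t : ℕ)
    (v : Fin (t+1) → V) (e : Fin t → Finset V) : Prop :=
  Function.Injective v ∧ Function.Injective e ∧ (∀ i, e i ∈ H) ∧
    ∀ i : Fin t, v i.castSucc ∈ e i ∧ v i.succ ∈ e i

def HasBergePath {V : Type*} (H : Finset (Finset V)) (t : ℕ) : Prop :=
  ∃ v e, IsBergePath H t v e

def cnext {t : ℕ} (i : Fin t) : Fin t := ⟨(i.1 + 1) % t, Nat.mod_lt _ i.pos⟩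

def cprev {t : ℕ} (i : Fin t) : Fin t := ⟨(i.1 + t - 1) % t, Nat.mod_lt _ i.pos⟩

def IsBergeCycle {V : Type*} (H : Finset (Finset V)) (t : ℕ)
    (v : Fin t → V) (e : Fin t → Finset V) : Prop :=
  Function.Injective v ∧ Function.Injective e ∧ (∀ i, e i ∈ H) ∧
    ∀ i : Fin t, v i ∈ e i ∧ v (cnext i) ∈ e i

def HasBergeCycle {V : Type*} (H : Finset (Finset V)) (t : ℕ) : Prop :=
  ∃ v e, IsBergeCycle H t v e

def BergeConnected {V : Type*} (H : Finset (Finset V)) : Prop :=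
  ∀ x y : V, x ≠ y → ∃ t v e, IsBergePath H t v e ∧ v 0 = x ∧ v (Fin.last t) = y

/-! Let `x` be a vertex missed by the cycle's hyperedges and walk from `x` to a vertex of the
cycle. Stop the walk at the first vertex `z` covered by the cycle; its hyperedges so far each
contain an uncovered vertex, so none is a cycle hyperedge. Open the cycle at a hyperedge
containing `z` (the one starting at `z` if `z` is a cycle vertex) into a Berge-path of length
`t - 1` from `z`; the two paths glue to one of length at least `t`. -/

open Finset

theorem cnext_eq_add_one {n : ℕ} (i : Fin (n + 1)) : cnext i = i + 1 := by
  ext; simp [cnext, Fin.val_add]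

section

variable {V : Type*} {H : Finset (Finset V)}

theorem hasBergePath_zero (H : Finset (Finset V)) (x : V) : HasBergePath H 0 :=
  ⟨fun _ => x, Fin.elim0, fun a b _ => Fin.ext (by omega), fun i => i.elim0,
    fun i => i.elim0, fun i => i.elim0⟩

namespace IsBergePath

variable {r : ℕ} {q : Fin (r + 1) → V} {f : Fin r → Finset V}

theorem castLE (hp : IsBergePath H r q f) {j : ℕ} (h : j ≤ r) :
    IsBergePath H j (fun i => q (Fin.castLE (by omega) i)) (fun i => f (Fin.castLE h i)) :=
  ⟨hp.1.comp (Fin.castLE_injective _), hp.2.1.comp (Fin.castLE_injective h),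
    fun _ => hp.2.2.1 _, fun i => hp.2.2.2 (Fin.castLE h i)⟩

theorem exists_first_entry (hp : IsBergePath H r q f) (S : Finset V) (h0 : q 0 ∉ S)
    (hr : q (Fin.last r) ∈ S) :
    ∃ j p g, IsBergePath H (j + 1) p g ∧ (∀ i, p (Fin.castSucc i) ∉ S) ∧
      p (Fin.last (j + 1)) ∈ S := by
  classical
  have hI : (univ.filter fun i => q i ∈ S).Nonempty := ⟨Fin.last r, by simpa using hr⟩
  set m := (univ.filter fun i => q i ∈ S).min' hI
  have hm : q m ∈ S := by simpa using (univ.filter fun i => q i ∈ S).min'_mem hI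
  have hmin : ∀ i < m, q i ∉ S := fun i hi hiS =>
    (Finset.min'_le _ i (by simpa using hiS)).not_gt hi
  obtain ⟨j, hj⟩ : ∃ j, m.val = j + 1 :=
    Nat.exists_eq_succ_of_ne_zero fun h => h0 (by rwa [show m = 0 from Fin.ext h] at hm)
  refine ⟨j, _, _, hp.castLE (j := j + 1) (by omega), fun i => hmin _ ?_, ?_⟩
  · simp only [Fin.lt_def, Fin.val_castLE, Fin.val_castSucc]
    omega
  · convert hm
    ext
    simp only [Fin.val_castLE, Fin.val_last, hj]

theorem append {a b : ℕ} {p : Fin (a + 1) → V} {f : Fin a → Finset V}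
    {q : Fin (b + 1) → V} {g : Fin b → Finset V}
    (hp : IsBergePath H a p f) (hq : IsBergePath H b q g) (hpq : p (Fin.last a) = q 0)
    (hv : ∀ (i : Fin a) k, p i.castSucc ≠ q k) (he : ∀ i k, f i ≠ g k) :
    -- without `m`, `n` the expected type `Fin (a + b + 1)` would be split as `(a + b) + 1`
    IsBergePath H (a + b) (Fin.append (m := a) (n := b + 1) (fun i => p i.castSucc) q)
      (Fin.append f g) := by
  obtain ⟨hpv, hpe, hpH, hpinc⟩ := hp
  obtain ⟨hqv, hqe, hqH, hqinc⟩ := hq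
  set w : Fin (a + b + 1) → V := Fin.append (m := a) (n := b + 1) (fun i => p i.castSucc) q
  have hw_left : ∀ j : Fin (a + 1), w (Fin.castLE (by omega) j) = p j := by
    refine Fin.lastCases ?_ (fun j => ?_)
    · rw [show Fin.castLE _ (Fin.last a) = Fin.natAdd a (0 : Fin (b + 1)) from Fin.ext rfl]
      exact (Fin.append_right _ q 0).trans hpq.symm
    · exact Fin.append_left' _ q j
  have hw_right : ∀ k : Fin (b + 1), w (Fin.natAdd a k) = q k := Fin.append_right _ q
  refine ⟨Fin.append_injective_iff.2 ⟨hpv.comp (Fin.castSucc_injective a), hqv, hv⟩,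
    Fin.append_injective_iff.2 ⟨hpe, hqe, he⟩,
    Fin.addCases (by simpa using hpH) (by simpa using hqH),
    Fin.addCases (fun i => ?_) (fun k => ?_)⟩
  · rw [Fin.append_left]
    exact ⟨hw_left i.castSucc ▸ (hpinc i).1, hw_left i.succ ▸ (hpinc i).2⟩
  · rw [Fin.append_right]
    exact ⟨hw_right k.castSucc ▸ (hqinc k).1, hw_right k.succ ▸ (hqinc k).2⟩

end IsBergePath

namespace IsBergeCycle

theorem exists_edge_mem_of_mem_biUnion [DecidableEq V] {t : ℕ} {v : Fin t → V}
    {e : Fin t → Finset V} (hC : IsBergeCycle H t v e) {z : V}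
    (hz : z ∈ univ.biUnion e) : ∃ k, z ∈ e k ∧ ∀ i, v i = z → i = k := by
  by_cases hzv : ∃ i, v i = z
  · obtain ⟨k, rfl⟩ := hzv
    exact ⟨k, (hC.2.2.2 k).1, fun i hi => hC.1 hi⟩
  · obtain ⟨k, -, hk⟩ := mem_biUnion.1 hz
    exact ⟨k, hk, fun i hi => (hzv ⟨i, hi⟩).elim⟩

variable {n : ℕ} {v : Fin (n + 1) → V} {e : Fin (n + 1) → Finset V}

theorem rotate (hC : IsBergeCycle H (n + 1) v e) (k : Fin (n + 1)) :
    IsBergeCycle H (n + 1) (fun i => v (i + k)) (fun i => e (i + k)) := by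
  obtain ⟨hv, he, hH, hinc⟩ := hC
  refine ⟨hv.comp (add_left_injective k), he.comp (add_left_injective k), fun i => hH _,
    fun i => ?_⟩
  simpa [cnext_eq_add_one, add_right_comm] using hinc (i + k)

theorem isBergePath_update_zero (hC : IsBergeCycle H (n + 1) v e) {z : V} (hz : z ∈ e 0)
    (hzv : ∀ i, v i = z → i = 0) :
    IsBergePath H n (Function.update v 0 z) (fun i => e i.castSucc) := by
  obtain ⟨hv, he, hH, hinc⟩ := hC
  refine ⟨?_, he.comp (Fin.castSucc_injective n), fun i => hH _, fun i => ⟨?_, ?_⟩⟩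
  · intro a b hab
    rcases eq_or_ne a 0 with rfl | ha <;> rcases eq_or_ne b 0 with rfl | hb
    · rfl
    · simp only [Function.update_self, Function.update_of_ne hb] at hab
      exact (hb (hzv b hab.symm)).elim
    · simp only [Function.update_self, Function.update_of_ne ha] at hab
      exact (ha (hzv a hab)).elim
    · simp only [Function.update_of_ne ha, Function.update_of_ne hb] at hab
      exact hv hab
  · rcases eq_or_ne i.castSucc 0 with hi | hi
    · simpa only [hi, Function.update_self] using hz
    · rw [Function.update_of_ne hi]; exact (hinc _).1
  · rw [Function.update_of_ne (Fin.succ_ne_zero i), ← Fin.coeSucc_eq_succ, ← cnext_eq_add_one]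
    exact (hinc _).2

theorem exists_isBergePath_of_mem_biUnion [DecidableEq V] (hC : IsBergeCycle H (n + 1) v e)
    {z : V} (hz : z ∈ univ.biUnion e) :
    ∃ q d, IsBergePath H n q d ∧ q 0 = z ∧ (∀ i, q i ∈ univ.biUnion e) ∧
      ∀ i, d i ⊆ univ.biUnion e := by
  obtain ⟨k, hk, hkv⟩ := hC.exists_edge_mem_of_mem_biUnion hz
  have hzv : ∀ i, v (i + k) = z → i = 0 := fun i hi => by simpa using hkv _ hi
  refine ⟨_, _, (hC.rotate k).isBergePath_update_zero (by simpa using hk) hzv,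
    Function.update_self .., fun i => ?_, fun i => subset_biUnion_of_mem e (mem_univ _)⟩
  rcases eq_or_ne i 0 with rfl | hi
  · simpa using hz
  · rw [Function.update_of_ne hi]
    exact mem_biUnion.2 ⟨_, mem_univ _, (hC.2.2.2 _).1⟩

end IsBergeCycle

end

/-- If `H` is a connected hypergraph and `C` a Berge-cycle whose defining hyperedges
together cover strictly fewer vertices than `|V(H)|`, then `H` contains a Berge-path
of length at least the length of `C`. -/
theorem bergePath_of_uncovered_vertex {V : Type*} [Fintype V] [DecidableEq V]
    (H : Finset (Finset V)) (t : ℕ)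
    (hconn : BergeConnected H)
    (v : Fin t → V) (e : Fin t → Finset V) (hC : IsBergeCycle H t v e)
    (hcov : (Finset.univ.biUnion (fun i => e i)).card < Fintype.card V) :
    ∃ m, t ≤ m ∧ HasBergePath H m := by
  set S := univ.biUnion e
  obtain ⟨x, -, hx⟩ := exists_mem_notMem_of_card_lt_card hcov
  cases t with
  | zero => exact ⟨0, le_rfl, hasBergePath_zero H x⟩
  | succ s =>
    have hv0 : v 0 ∈ S := mem_biUnion.2 ⟨0, mem_univ _, (hC.2.2.2 0).1⟩
    obtain ⟨r, q, f, hq, rfl, hqv⟩ := hconn x (v 0) fun h => hx (h ▸ hv0)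
    obtain ⟨j, p, g, hp, hpS, hpz⟩ := hq.exists_first_entry S hx (hqv ▸ hv0)
    obtain ⟨q', d, hq', hq'0, hq'S, hdS⟩ := hC.exists_isBergePath_of_mem_biUnion hpz
    exact ⟨j + 1 + s, by omega, _, _, hp.append hq' hq'0.symm
      (fun i k h => hpS i (h ▸ hq'S k)) (fun i k h => hpS i (hdS k (h ▸ (hp.2.2.2 i).1)))⟩
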